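/- arXiv:1707.05807 — 5 statements merged into one kernel-verified Lean document; each statement's English description precedes it below -/
import Mathlib

section
/- Fix w, w' > 0 and real numbers 0 ≤ r ≤ s. For any z ∈ [r, s], |1/(1+z·w) - 1/(1+z·w')| ≤ |w - w'|·z* / ((1 + z*·w)(1 + z*·w')), where z* = max(r, min(s, 1/√(w·w'))). -/
/-!
Writing `g z = z / ((1 + z * w) * (1 + z * w'))`, the left-hand side is `|w - w'| * g z`.
Cross-multiplying, `g z ≤ g a` is equivalent to `(z - a) * (1 - w * w' * z * a) ≤ 0`, so `g`
increases up to `1 / √(w * w')` and decreases afterwards; hence on `[r, s]` it is maximal at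
the projection `z*` of that peak onto `[r, s]`.
-/

open Real Set

lemma one_div_one_add_mul_sub_one_div_one_add_mul {z w w' : ℝ}
    (h : 0 < 1 + z * w) (h' : 0 < 1 + z * w') :
    1 / (1 + z * w) - 1 / (1 + z * w') = (w' - w) * z / ((1 + z * w) * (1 + z * w')) := by
  field_simp
  ring

lemma div_one_add_mul_le_div_one_add_mul {z a w w' : ℝ} (hz : 0 ≤ z) (ha : 0 ≤ a)
    (hw : 0 ≤ w) (hw' : 0 ≤ w') (hza : (z - a) * (1 - w * w' * (z * a)) ≤ 0) :
    z / ((1 + z * w) * (1 + z * w')) ≤ a / ((1 + a * w) * (1 + a * w')) := by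
  rw [div_le_div_iff₀ (by positivity) (by positivity)]
  -- the difference of the two sides factors as `(z - a) * (1 - w * w' * z * a)`
  linear_combination hza

lemma sub_max_min_mul_sq_sub_mul_nonpos {r s t z : ℝ} (hr : 0 ≤ r) (ht : 0 ≤ t)
    (hz : z ∈ Icc r s) :
    (z - max r (min s t)) * (t ^ 2 - z * max r (min s t)) ≤ 0 := by
  set a := max r (min s t)
  obtain ⟨hrz, hzs⟩ := hz
  rcases lt_trichotomy z a with hlt | heq | hgt
  · have hat : a ≤ t := by
      have hrmin : r < min s t := lt_max_iff.mp (hrz.trans_lt hlt) |>.resolve_left (lt_irrefl r)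
      exact (max_eq_right hrmin.le).trans_le (min_le_right s t)
    have : z * a ≤ t ^ 2 := by nlinarith
    nlinarith
  · simp [heq]
  · have hta : t ≤ a := by
      have hts : t ≤ s := by
        by_contra! hst
        exact hgt.not_ge (hzs.trans ((min_eq_left hst.le).symm.trans_le (le_max_right r _)))
      exact (min_eq_right hts).symm.trans_le (le_max_right r _)
    have : t ^ 2 ≤ z * a := by nlinarith
    nlinarith

theorem stmt_5_general (w w' r s : ℝ) (hw : 0 < w) (hw' : 0 < w') (hr : 0 ≤ r)
    (z : ℝ) (hz : z ∈ Set.Icc r s) :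
    |1 / (1 + z * w) - 1 / (1 + z * w')| ≤
      |w - w'| * (max r (min s (1 / Real.sqrt (w * w')))) /
        ((1 + (max r (min s (1 / Real.sqrt (w * w')))) * w) *
          (1 + (max r (min s (1 / Real.sqrt (w * w')))) * w')) := by
  set t := 1 / √(w * w')
  set a := max r (min s t)
  have hz0 : 0 ≤ z := hr.trans hz.1
  have ha0 : 0 ≤ a := hr.trans (le_max_left _ _)
  have ht_sq : w * w' * t ^ 2 = 1 := by
    rw [div_pow, one_pow, sq_sqrt (by positivity)]
    field_simp
  have hpeak := sub_max_min_mul_sq_sub_mul_nonpos hr (by positivity : 0 ≤ t) hz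
  have hle : z / ((1 + z * w) * (1 + z * w')) ≤ a / ((1 + a * w) * (1 + a * w')) :=
    div_one_add_mul_le_div_one_add_mul hz0 ha0 hw.le hw'.le
      (by nlinarith [mul_pos hw hw'])
  have hden : 0 < (1 + z * w) * (1 + z * w') := by positivity
  rw [one_div_one_add_mul_sub_one_div_one_add_mul (by positivity) (by positivity),
    abs_div, abs_mul, abs_of_nonneg hz0, abs_of_pos hden, abs_sub_comm,
    mul_div_assoc, mul_div_assoc]
  exact mul_le_mul_of_nonneg_left hle (abs_nonneg _)

theorem stmt_5 (w w' r s : ℝ) (hw : 0 < w) (hw' : 0 < w') (hr : 0 ≤ r) (hrs : r ≤ s)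
    (z : ℝ) (hz : z ∈ Set.Icc r s) :
    |1 / (1 + z * w) - 1 / (1 + z * w')| ≤
      |w - w'| * (max r (min s (1 / Real.sqrt (w * w')))) /
        ((1 + (max r (min s (1 / Real.sqrt (w * w')))) * w) *
          (1 + (max r (min s (1 / Real.sqrt (w * w')))) * w')) :=
  stmt_5_general w w' r s hw hw' hr z hz
end

section
/- Let C be a p×p nonnegative real matrix with spectral norm ‖C‖ < 1, and for a probability vector q ∈ ℝ^p define B(q) = I - diag(q)(I - C). If q_t = e_{(t mod p)+1} is the systematic scan, then for any nonnegative vector d ∈ ℝ^p, the quantity dᵀ B(q_T)···B(q_1) 1 converges to 0 as T → ∞. -/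
/-!
Since `‖C‖ < 1`, the Neumann series `u = ∑ₖ Cᵏ 1` converges; it is `≥ 1` entrywise and satisfies
`C u = u - 1 ≤ θ u` for some `θ < 1`. Step `t` of the scan replaces coordinate `i = t mod p` of `v`
by `(C v)ᵢ`, which is monotone in `v`. Hence if `v ≤ c u` at the start of a sweep, every coordinate
updated during the sweep is at most `θ c uᵢ` and stays so, and after the sweep `v ≤ θ c u`. So
`v_T ≤ θ^⌊T/p⌋ u`, and `0 ≤ dᵀ v_T ≤ θ^⌊T/p⌋ dᵀ u → 0`.
-/

open Matrix
open scoped Matrix.Norms.L2Operator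

namespace Matrix

variable {n : Type*} [Fintype n]

theorem mulVec_mono_of_nonneg {R : Type*} [Semiring R] [PartialOrder R] [IsOrderedRing R]
    {C : Matrix n n R} (hC : ∀ i j, 0 ≤ C i j) {v w : n → R} (hvw : v ≤ w) :
    C *ᵥ v ≤ C *ᵥ w := fun i =>
  dotProduct_le_dotProduct_of_nonneg_left hvw (hC i)

theorem mulVec_nonneg_of_nonneg {R : Type*} [Semiring R] [PartialOrder R] [IsOrderedRing R]
    {C : Matrix n n R} (hC : ∀ i j, 0 ≤ C i j) {v : n → R} (hv : 0 ≤ v) : 0 ≤ C *ᵥ v := by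
  simpa using mulVec_mono_of_nonneg hC hv

theorem one_sub_diagonal_single_mul_mulVec {R : Type*} [CommRing R] [DecidableEq n]
    (C : Matrix n n R) (i : n) (v : n → R) :
    (1 - diagonal (Pi.single i 1) * (1 - C)) *ᵥ v = Function.update v i ((C *ᵥ v) i) := by
  ext j
  rw [sub_mulVec, one_mulVec, ← mulVec_mulVec, sub_mulVec, one_mulVec, Pi.sub_apply,
    mulVec_diagonal]
  rcases eq_or_ne j i with rfl | hji
  · simp
  · simp [hji]

theorem exists_one_le_mulVec_eq_sub_one [DecidableEq n] {C : Matrix n n ℝ}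
    (hC : ∀ i j, 0 ≤ C i j) (hs : Summable fun k => C ^ k) :
    ∃ u : n → ℝ, 1 ≤ u ∧ C *ᵥ u = u - 1 := by
  have hsum : HasSum (fun k => C ^ k *ᵥ 1) ((∑' k, C ^ k) *ᵥ 1) :=
    hs.hasSum.map (mulVec.addMonoidHomLeft 1) (continuous_id.matrix_mulVec continuous_const)
  have hnonneg : ∀ k, 0 ≤ C ^ k *ᵥ 1 := by
    intro k
    induction k with
    | zero => simp [zero_le_one]
    | succ k ih => rw [pow_succ', ← mulVec_mulVec]; exact mulVec_nonneg_of_nonneg hC ih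
  refine ⟨_, by simpa using le_hasSum hsum 0 fun k _ => hnonneg k, ?_⟩
  have hshift : HasSum (fun k => C ^ (k + 1) *ᵥ 1) (C *ᵥ (∑' k, C ^ k) *ᵥ 1) := by
    simpa [Function.comp_def, pow_succ', ← mulVec_mulVec] using
      hsum.map (mulVecLin C).toAddMonoidHom (continuous_const.matrix_mulVec continuous_id)
  exact hshift.unique (by simpa using (hasSum_nat_add_iff' 1).2 hsum)

theorem mulVec_le_smul_of_le_smul {C : Matrix n n ℝ} (hC : ∀ i j, 0 ≤ C i j) {u v : n → ℝ}
    {θ c : ℝ} (hCu : C *ᵥ u ≤ θ • u) (hc : 0 ≤ c) (hv : v ≤ c • u) : C *ᵥ v ≤ (θ * c) • u :=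
  calc C *ᵥ v ≤ C *ᵥ (c • u) := mulVec_mono_of_nonneg hC hv
    _ = c • C *ᵥ u := mulVec_smul C c u
    _ ≤ c • θ • u := smul_le_smul_of_nonneg_left hCu hc
    _ = (θ * c) • u := by rw [smul_smul, mul_comm]

end Matrix

theorem exists_sub_one_le_smul_of_nonneg {n : Type*} [Fintype n] {u : n → ℝ} (hu : 0 ≤ u) :
    ∃ θ : ℝ, 0 ≤ θ ∧ θ < 1 ∧ u - 1 ≤ θ • u := by
  set K := 1 + ∑ i, u i
  have hK : 1 ≤ K := le_add_of_nonneg_right (Finset.sum_nonneg fun j _ => hu j)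
  have hK0 : 0 < K := one_pos.trans_le hK
  have huK : ∀ i, u i ≤ K := fun i =>
    (Finset.single_le_sum (fun j _ => hu j) (Finset.mem_univ i)).trans
      (le_add_of_nonneg_left zero_le_one)
  refine ⟨1 - 1 / K, sub_nonneg.2 ((div_le_one hK0).2 hK), by simpa using hK0, fun i => ?_⟩
  have : u i / K ≤ 1 := (div_le_one hK0).2 (huK i)
  simp only [Pi.sub_apply, Pi.one_apply, Pi.smul_apply, smul_eq_mul]
  rw [sub_mul, one_mul, one_div_mul_eq_div]
  linarith

def SystematicScan {p : ℕ} (hp : 0 < p) (C : Matrix (Fin p) (Fin p) ℝ) (v : ℕ → Fin p → ℝ) :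
    Prop :=
  ∀ t, v (t + 1) =
    Function.update (v t) ⟨t % p, Nat.mod_lt t hp⟩ ((C *ᵥ v t) ⟨t % p, Nat.mod_lt t hp⟩)

namespace SystematicScan

variable {p : ℕ} {hp : 0 < p} {C : Matrix (Fin p) (Fin p) ℝ} {v : ℕ → Fin p → ℝ}

theorem nonneg (hv : SystematicScan hp C v) (hC : ∀ i j, 0 ≤ C i j) (h0 : 0 ≤ v 0) (t : ℕ) :
    0 ≤ v t := by
  induction t with
  | zero => exact h0
  | succ t ih =>
    rw [hv t, le_update_iff]
    exact ⟨mulVec_nonneg_of_nonneg hC ih _, fun j _ => ih j⟩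

theorem sweep_le_smul (hv : SystematicScan hp C v) (hC : ∀ i j, 0 ≤ C i j) {u : Fin p → ℝ} {θ c : ℝ}
    (hu : 0 ≤ u) (hCu : C *ᵥ u ≤ θ • u) (hθ : θ ≤ 1) (hc : 0 ≤ c) {k : ℕ}
    (hk : v (k * p) ≤ c • u) (s : ℕ) (hs : s ≤ p) :
    v (k * p + s) ≤ c • u ∧ ∀ i : Fin p, (i : ℕ) < s → v (k * p + s) i ≤ θ * c * u i := by
  induction s with
  | zero => exact ⟨hk, fun i hi => absurd hi (Nat.not_lt_zero _)⟩
  | succ s ih =>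
    obtain ⟨hle, hdone⟩ := ih (by omega)
    have hmod : (k * p + s) % p = s := by
      rw [Nat.add_comm, Nat.add_mul_mod_self_right, Nat.mod_eq_of_lt hs]
    have hCv := mulVec_le_smul_of_le_smul hC hCu hc hle
    have hθc : ∀ i, θ * c * u i ≤ c * u i := fun i =>
      mul_le_mul_of_nonneg_right (mul_le_of_le_one_left hc hθ) (hu i)
    rw [← add_assoc, hv]
    refine ⟨update_le_iff.2 ⟨(hCv _).trans (hθc _), fun j _ => hle j⟩, fun i hi => ?_⟩
    rw [Function.update_apply]
    split_ifs with hi'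
    · subst hi'
      exact hCv _
    · have hi_ne : (i : ℕ) ≠ s := fun h => hi' (Fin.ext (h.trans hmod.symm))
      exact hdone i (by omega)

theorem le_pow_div_smul (hv : SystematicScan hp C v) (hC : ∀ i j, 0 ≤ C i j) {u : Fin p → ℝ} {θ : ℝ}
    (hu : 0 ≤ u) (hCu : C *ᵥ u ≤ θ • u) (hθ0 : 0 ≤ θ) (hθ1 : θ ≤ 1) (h0 : v 0 ≤ u) (T : ℕ) :
    v T ≤ θ ^ (T / p) • u := by
  have hsweeps : ∀ k, v (k * p) ≤ θ ^ k • u := by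
    intro k
    induction k with
    | zero => simpa using h0
    | succ k ih =>
      intro i
      rw [add_one_mul, Pi.smul_apply, smul_eq_mul, pow_succ']
      exact (hv.sweep_le_smul hC hu hCu hθ1 (pow_nonneg hθ0 k) ih p le_rfl).2 i i.2
  have := (hv.sweep_le_smul hC hu hCu hθ1 (pow_nonneg hθ0 _) (hsweeps (T / p)) (T % p)
    (Nat.mod_lt T hp).le).1
  rwa [Nat.div_add_mod'] at this

end SystematicScan

open Filter Topology

theorem stmt_6 {p : ℕ} (hp : 0 < p)
    (C : Matrix (Fin p) (Fin p) ℝ) (hC : ∀ i j, 0 ≤ C i j)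
    (hnorm : ‖C‖ < 1)
    (d : Fin p → ℝ) (hd : ∀ i, 0 ≤ d i)
    (v : ℕ → Fin p → ℝ) (hv0 : v 0 = 1)
    (hv : ∀ t : ℕ,
      v (t + 1) =
        (1 - Matrix.diagonal (Pi.single (⟨t % p, Nat.mod_lt t hp⟩ : Fin p) 1) *
            (1 - C)).mulVec (v t)) :
    Filter.Tendsto (fun T => d ⬝ᵥ v T) Filter.atTop (nhds 0) := by
  have hscan : SystematicScan hp C v := fun t => by rw [hv, one_sub_diagonal_single_mul_mulVec]
  obtain ⟨u, hu1, hCu⟩ :=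
    exists_one_le_mulVec_eq_sub_one hC (summable_geometric_of_norm_lt_one hnorm)
  have hu0 : 0 ≤ u := zero_le_one.trans hu1
  obtain ⟨θ, hθ0, hθ1, hθ⟩ := exists_sub_one_le_smul_of_nonneg hu0
  have hbound (T : ℕ) : d ⬝ᵥ v T ≤ θ ^ (T / p) * (d ⬝ᵥ u) := by
    rw [← smul_eq_mul, ← dotProduct_smul]
    exact dotProduct_le_dotProduct_of_nonneg_left
      (hscan.le_pow_div_smul hC hu0 (hCu ▸ hθ) hθ0 hθ1.le (hv0 ▸ hu1) T) hd
  have hlim : Tendsto (fun T => θ ^ (T / p) * (d ⬝ᵥ u)) atTop (𝓝 0) := by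
    simpa using ((tendsto_pow_atTop_nhds_zero_of_lt_one hθ0 hθ1).comp
      (Nat.tendsto_div_const_atTop hp.ne')).mul_const (d ⬝ᵥ u)
  exact squeeze_zero
    (fun T => dotProduct_nonneg_of_nonneg hd (hscan.nonneg hC (hv0 ▸ zero_le_one) T)) hbound hlim
end

section
/- Let (p_t)_{t=0}^T be vectors in ℝ^p satisfying p_0 ≤ 1 entrywise, and suppose for each t there is an index i_t such that p_{t, i_t} ≤ Σ_{j ≠ i_t} C_{i_t j} · p_{t-1, j} and p_{t,i} ≤ p_{t-1,i} for i ≠ i_t, where C is entrywise nonnegative with zero diagonal. Then for any nonnegative d ∈ ℝ^p, dᵀ p_T ≤ dᵀ B(e_{i_T})···B(e_{i_1}) 1, where B(q) = I - diag(q)(I - C). -/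
/-!
Read row by row, `B(e_i) = I - diag(e_i)(I - C)` replaces the `i`-th coordinate of `v` by `(C v)_i`
and keeps the others. Since `C` has zero diagonal, the hypotheses say that `p_t` is bounded by this
update applied to `p_{t-1}`, and since `C ≥ 0` the update is monotone in `v`. Induction from
`p_0 ≤ 1` gives `p_T ≤ B(e_{i_T}) ⋯ B(e_{i_1}) 1` entrywise, and pairing with `d ≥ 0` keeps it.
-/

open Matrix

namespace Matrix

variable {n R : Type*} [Fintype n] [DecidableEq n]

lemma one_sub_diagonal_single_mul_one_sub_mulVec [Ring R] (C : Matrix n n R) (i : n)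
    (v : n → R) :
    (1 - diagonal (Pi.single i 1) * (1 - C)) *ᵥ v = Function.update v i ((C *ᵥ v) i) := by
  ext k
  rcases eq_or_ne k i with rfl | hk
  · simp [mulVec, dotProduct, sub_apply, diagonal_mul]
  · simp [mulVec, dotProduct, sub_apply, diagonal_mul, hk, one_apply]

lemma le_update_mulVec_of_le [Semiring R] [PartialOrder R] [IsOrderedRing R]
    {C : Matrix n n R} (hC : ∀ i j, 0 ≤ C i j) {x y x' : n → R} {i : n} (hxy : x ≤ y)
    (hi : x' i ≤ (C *ᵥ x) i) (hk : ∀ k, k ≠ i → x' k ≤ x k) :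
    x' ≤ Function.update y i ((C *ᵥ y) i) := by
  intro k
  rcases eq_or_ne k i with rfl | hki
  · rw [Function.update_self]
    exact hi.trans (dotProduct_le_dotProduct_of_nonneg_left hxy (hC k))
  · rw [Function.update_of_ne hki]
    exact (hk k hki).trans (hxy k)

end Matrix

theorem stmt_9 {p : ℕ}
    (C : Matrix (Fin p) (Fin p) ℝ) (hC : ∀ i j, 0 ≤ C i j) (hdiag : ∀ i, C i i = 0)
    (T : ℕ) (P : ℕ → Fin p → ℝ) (idx : ℕ → Fin p)
    (h0 : ∀ i, P 0 i ≤ 1)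
    (hrec1 : ∀ t, 1 ≤ t → t ≤ T →
      P t (idx t) ≤ ∑ j ∈ Finset.univ.filter (· ≠ idx t), C (idx t) j * P (t - 1) j)
    (hrec2 : ∀ t, 1 ≤ t → t ≤ T → ∀ i, i ≠ idx t → P t i ≤ P (t - 1) i)
    (d : Fin p → ℝ) (hd : ∀ i, 0 ≤ d i)
    (b : ℕ → Fin p → ℝ) (hb0 : b 0 = 1)
    (hb : ∀ t : ℕ,
      b (t + 1) =
        (1 - Matrix.diagonal (Pi.single (idx (t + 1)) 1) * (1 - C)).mulVec (b t)) :
    d ⬝ᵥ P T ≤ d ⬝ᵥ b T := by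
  have hrow (i : Fin p) (x : Fin p → ℝ) :
      ∑ j ∈ Finset.univ.filter (· ≠ i), C i j * x j = (C *ᵥ x) i := by
    rw [Finset.filter_ne', Finset.sum_erase _ (by simp [hdiag])]
    rfl
  have hPb : ∀ t ≤ T, P t ≤ b t := by
    intro t
    induction t with
    | zero => intro _ i; simpa [hb0] using h0 i
    | succ t ih =>
      intro ht
      rw [hb, one_sub_diagonal_single_mul_one_sub_mulVec]
      refine le_update_mulVec_of_le hC (ih (by omega)) ?_ (hrec2 (t + 1) (by omega) ht)
      simpa [hrow] using hrec1 (t + 1) (by omega) ht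
  exact dotProduct_le_dotProduct_of_nonneg_left (hPb T le_rfl) hd
end

section
/- Consider the Ising-type conditional probability π_i(x) = 1/(1 + exp(-2 Σ_{k≠i} θ_{ik} x_k - 2θ_i)) for x ∈ {-1,1}^p. For any two configurations x, y differing only in coordinate j (j ≠ i), |π_i(x) - π_i(y)| ≤ (e^{2|θ_{ij}|} - e^{-2|θ_{ij}|})·b* / ((1 + b*·e^{2θ_{ij}})(1 + b*·e^{-2θ_{ij}})) where b* = max(e^{-2Σ_{k≠j,k≠i}|θ_{ik}| - 2θ_i}, min(e^{2Σ_{k≠j,k≠i}|θ_{ik}| - 2θ_i}, 1)). -/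
/-!
Write the local field at `i` as `θᵢⱼ xⱼ + R`, where `R` collects the neighbours other than `j`
and is shared by `x` and `y`. With `b = exp (-2R - 2θᵢ)`, `πᵢ z = 1 / (1 + b e^{-2θᵢⱼ zⱼ})` for
`z = x, y`, so if `xⱼ ≠ yⱼ` the difference is `± (e^{2θᵢⱼ} - e^{-2θᵢⱼ}) · b / ((1 + b e^{2θᵢⱼ})(1 + b e^{-2θᵢⱼ}))`.
The last factor equals `1 / (b + b⁻¹ + e^{2θᵢⱼ} + e^{-2θᵢⱼ})`, so it is largest when `b + b⁻¹` is
smallest. Since `|R| ≤ ∑_{k ≠ i, j} |θᵢₖ|`, `b` lies in an interval `[lo, hi]`, and on it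
`b + b⁻¹` is minimised at `b* = max lo (min hi 1)`, the point nearest to `1`.
-/

open Real Finset

lemma abs_exp_sub_exp_neg (u : ℝ) : |exp u - exp (-u)| = exp |u| - exp (-|u|) := by
  have h : ∀ v, exp v - exp (-v) = 2 * sinh v := fun v => by rw [sinh_eq]; ring
  rw [h, h, abs_mul, abs_two, abs_sinh]

lemma add_inv_max_min_one_le {lo hi b : ℝ} (hlo : 0 < lo) (hlob : lo ≤ b) (hbhi : b ≤ hi) :
    max lo (min hi 1) + (max lo (min hi 1))⁻¹ ≤ b + b⁻¹ := by
  set c := max lo (min hi 1)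
  have hc : 0 < c := lt_max_of_lt_left hlo
  have hb : 0 < b := hlo.trans_le hlob
  -- `c` lies between `b` and `1`, hence between `b` and `b⁻¹`
  have hbetween : (b - c) * (1 - b * c) ≤ 0 := by
    rcases le_total b 1 with hb1 | hb1
    · have hbc : b ≤ c := le_max_of_le_right (le_min hbhi hb1)
      have hc1 : c ≤ 1 := max_le (hlob.trans hb1) (min_le_right _ _)
      have hbc1 : b * c ≤ 1 := mul_le_one₀ hb1 hc.le hc1
      exact mul_nonpos_of_nonpos_of_nonneg (by linarith) (by linarith)
    · have hcb : c ≤ b := max_le hlob ((min_le_right _ _).trans hb1)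
      have hc1 : 1 ≤ c := le_max_of_le_right (le_min (hb1.trans hbhi) le_rfl)
      have hbc1 : 1 ≤ b * c := one_le_mul_of_one_le_of_one_le hb1 hc1
      exact mul_nonpos_of_nonneg_of_nonpos (by linarith) (by linarith)
  have hdiff : c + c⁻¹ - (b + b⁻¹) = (b - c) * (1 - b * c) / (b * c) := by
    field_simp
    ring
  rw [← sub_nonpos, hdiff]
  exact div_nonpos_of_nonpos_of_nonneg hbetween (by positivity)

lemma div_one_add_mul_exp_mul_eq_inv {b : ℝ} (hb : b ≠ 0) (s : ℝ) :
    b / ((1 + b * exp s) * (1 + b * exp (-s))) = (b + b⁻¹ + (exp s + exp (-s)))⁻¹ := by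
  have hs : exp s * exp (-s) = 1 := by rw [← exp_add, add_neg_cancel, exp_zero]
  have hden : (1 + b * exp s) * (1 + b * exp (-s)) = b * (b + b⁻¹ + (exp s + exp (-s))) := by
    field_simp
    linear_combination b ^ 2 * hs
  rw [hden, div_mul_cancel_left₀ hb]

lemma one_div_one_add_mul_exp_neg_sub {b : ℝ} (hb : 0 < b) (s : ℝ) :
    1 / (1 + b * exp (-s)) - 1 / (1 + b * exp s) =
      (exp s - exp (-s)) * (b / ((1 + b * exp s) * (1 + b * exp (-s)))) := by
  have h₁ : 0 < 1 + b * exp s := by positivity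
  have h₂ : 0 < 1 + b * exp (-s) := by positivity
  field_simp
  ring

lemma abs_one_div_one_add_mul_exp_neg_sub_le {b B : ℝ} (hb : 0 < b) (hB : 0 < B)
    (hbB : B + B⁻¹ ≤ b + b⁻¹) (s : ℝ) :
    |1 / (1 + b * exp (-s)) - 1 / (1 + b * exp s)| ≤
      (exp |s| - exp (-|s|)) * B / ((1 + B * exp s) * (1 + B * exp (-s))) := by
  have hsinh : 0 ≤ exp |s| - exp (-|s|) := by
    rw [← abs_exp_sub_exp_neg]
    exact abs_nonneg _
  rw [one_div_one_add_mul_exp_neg_sub hb s, abs_mul, abs_exp_sub_exp_neg, mul_div_assoc,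
    div_one_add_mul_exp_mul_eq_inv hb.ne', div_one_add_mul_exp_mul_eq_inv hB.ne',
    abs_of_pos (a := (b + b⁻¹ + (exp s + exp (-s)))⁻¹) (by positivity)]
  gcongr

lemma abs_sum_mul_le_sum_abs_of_sign {ι : Type*} (s : Finset ι) (a x : ι → ℝ)
    (hx : ∀ k, x k = -1 ∨ x k = 1) : |∑ k ∈ s, a k * x k| ≤ ∑ k ∈ s, |a k| := by
  refine (abs_sum_le_sum_abs _ _).trans (sum_le_sum fun k _ => ?_)
  rcases hx k with h | h <;> simp [h]

lemma sum_filter_ne_eq_add_sum_filter_ne_ne {ι : Type*} [Fintype ι] [DecidableEq ι]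
    {i j : ι} (hij : i ≠ j) (f : ι → ℝ) :
    ∑ k ∈ univ.filter (· ≠ i), f k = f j + ∑ k ∈ univ.filter (fun k => k ≠ j ∧ k ≠ i), f k := by
  have h : univ.filter (fun k => k ≠ j ∧ k ≠ i) = (univ.filter (· ≠ i)).erase j := by
    ext k
    simp [and_comm]
  rw [h, add_sum_erase _ _ (by simpa using hij.symm)]

lemma abs_sub_le_of_sign {f : ℝ → ℝ} {C σ τ : ℝ} (hσ : σ = -1 ∨ σ = 1) (hτ : τ = -1 ∨ τ = 1)
    (hf : |f 1 - f (-1)| ≤ C) : |f σ - f τ| ≤ C := by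
  have hC : 0 ≤ C := (abs_nonneg _).trans hf
  rcases hσ with rfl | rfl <;> rcases hτ with rfl | rfl
  · simpa using hC
  · rwa [abs_sub_comm]
  · exact hf
  · simpa using hC

theorem stmt_11 {p : ℕ}
    (θ : Fin p → Fin p → ℝ) (θ0 : Fin p → ℝ) (i j : Fin p) (hij : i ≠ j)
    (x y : Fin p → ℝ) (hx : ∀ k, x k = -1 ∨ x k = 1) (hy : ∀ k, y k = -1 ∨ y k = 1)
    (hdiff : ∀ k, k ≠ j → x k = y k)
    (πi : (Fin p → ℝ) → ℝ)
    (hπi : ∀ z : Fin p → ℝ,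
      πi z = 1 / (1 + Real.exp (-(2 * ∑ k ∈ Finset.univ.filter (· ≠ i), θ i k * z k)
        - 2 * θ0 i)))
    (bstar : ℝ)
    (hbstar : bstar =
      max (Real.exp (-(2 * ∑ k ∈ Finset.univ.filter (fun k => k ≠ j ∧ k ≠ i), |θ i k|)
            - 2 * θ0 i))
        (min (Real.exp (2 * ∑ k ∈ Finset.univ.filter (fun k => k ≠ j ∧ k ≠ i), |θ i k|
            - 2 * θ0 i)) 1)) :
    |πi x - πi y| ≤
      (Real.exp (2 * |θ i j|) - Real.exp (-(2 * |θ i j|))) * bstar /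
        ((1 + bstar * Real.exp (2 * θ i j)) * (1 + bstar * Real.exp (-(2 * θ i j)))) := by
  set S := univ.filter (fun k => k ≠ j ∧ k ≠ i)
  set R := ∑ k ∈ S, θ i k * x k
  set b := exp (-(2 * R) - 2 * θ0 i)
  have hR : ∑ k ∈ S, θ i k * y k = R :=
    sum_congr rfl fun k hk => by rw [hdiff k (mem_filter.mp hk).2.1]
  have hπ : ∀ z, ∑ k ∈ S, θ i k * z k = R →
      πi z = 1 / (1 + b * exp (-(2 * θ i j * z j))) := fun z hz => by
    rw [hπi, sum_filter_ne_eq_add_sum_filter_ne_ne hij, hz, ← exp_add]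
    ring_nf
  obtain ⟨hRlo, hRhi⟩ := abs_le.mp (abs_sum_mul_le_sum_abs_of_sign S (θ i) x hx)
  have hb : bstar + bstar⁻¹ ≤ b + b⁻¹ := hbstar ▸
    add_inv_max_min_one_le (exp_pos _) (exp_le_exp.mpr (by linarith)) (exp_le_exp.mpr (by linarith))
  have hbound := abs_one_div_one_add_mul_exp_neg_sub_le (exp_pos _)
    (hbstar ▸ lt_max_of_lt_left (exp_pos _)) hb (2 * θ i j)
  rw [abs_mul, abs_two] at hbound
  rw [hπ x rfl, hπ y hR]
  exact abs_sub_le_of_sign (f := fun σ => 1 / (1 + b * exp (-(2 * θ i j * σ)))) (hx j) (hy j)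
    (by simpa using hbound)
end

section
/- For σ(s) = 1/(1+e^{-s}) and any reals u ≤ v, sup over t ∈ ℝ of |σ(t + v) - σ(t + u)| = 2σ((v-u)/2) - 1 = |2σ((v-u)/2) - 1|, attained at t = -(u+v)/2. -/
/-!
Write `B = exp (-t)` and `C = exp (-d / 2) ∈ (0, 1]`. Then `σ (t + d) - σ t = (1 + B C²)⁻¹ - (1 + B)⁻¹`
and `2 σ (d / 2) - 1 = (1 - C) / (1 + C)`, and the gap between the two is
`(1 - C) (1 - B C)² / ((1 + C) (1 + B C²) (1 + B)) ≥ 0`, with equality exactly when `B C = 1`,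
i.e. at the midpoint `t = -d / 2`, where `σ (d / 2) - σ (-d / 2) = 2 σ (d / 2) - 1`.
-/

open Real Set

lemma inv_one_add_mul_sq_sub_inv_one_add_le {B C : ℝ} (hB : 0 ≤ B) (hC : 0 ≤ C) (hC1 : C ≤ 1) :
    (1 + B * C ^ 2)⁻¹ - (1 + B)⁻¹ ≤ 2 * (1 + C)⁻¹ - 1 := by
  have h1 : 0 < 1 + B * C ^ 2 := by positivity
  have h2 : 0 < 1 + B := by positivity
  have h3 : 0 < 1 + C := by positivity
  rw [← sub_nonneg]
  have hgap : 2 * (1 + C)⁻¹ - 1 - ((1 + B * C ^ 2)⁻¹ - (1 + B)⁻¹) =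
      (1 - C) * (1 - B * C) ^ 2 / ((1 + C) * (1 + B * C ^ 2) * (1 + B)) := by
    field_simp
    ring
  rw [hgap]
  have : 0 ≤ 1 - C := by linarith
  positivity

lemma sigmoid_add_sub_sigmoid_le (t : ℝ) {d : ℝ} (hd : 0 ≤ d) :
    sigmoid (t + d) - sigmoid t ≤ 2 * sigmoid (d / 2) - 1 := by
  have hexp : exp (-(t + d)) = exp (-t) * exp (-(d / 2)) ^ 2 := by
    rw [← exp_nat_mul, ← exp_add]; ring_nf
  simp only [sigmoid_def, hexp]
  exact inv_one_add_mul_sq_sub_inv_one_add_le (exp_pos _).le (exp_pos _).le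
    (exp_le_one_iff.mpr (by linarith))

lemma two_mul_sigmoid_sub_one_nonneg {x : ℝ} (hx : 0 ≤ x) : 0 ≤ 2 * sigmoid x - 1 := by
  have := sigmoid_le hx
  rw [sigmoid_zero] at this
  linarith

lemma abs_sigmoid_add_sub_sigmoid_add_le (t : ℝ) {u v : ℝ} (huv : u ≤ v) :
    |sigmoid (t + v) - sigmoid (t + u)| ≤ 2 * sigmoid ((v - u) / 2) - 1 := by
  rw [abs_of_nonneg (sub_nonneg.mpr (sigmoid_le (by linarith)))]
  simpa [add_sub_cancel, add_assoc] using sigmoid_add_sub_sigmoid_le (t + u) (sub_nonneg.mpr huv)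

lemma abs_sigmoid_sub_sigmoid_at_midpoint {u v : ℝ} (huv : u ≤ v) :
    |sigmoid (-(u + v) / 2 + v) - sigmoid (-(u + v) / 2 + u)| = 2 * sigmoid ((v - u) / 2) - 1 := by
  have h₁ : -(u + v) / 2 + v = (v - u) / 2 := by ring
  have h₂ : -(u + v) / 2 + u = -((v - u) / 2) := by ring
  rw [h₁, h₂, sigmoid_neg, abs_of_nonneg] <;>
    linarith [two_mul_sigmoid_sub_one_nonneg (x := (v - u) / 2) (by linarith)]

lemma isGreatest_range_abs_sigmoid_add_sub_sigmoid_add {u v : ℝ} (huv : u ≤ v) :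
    IsGreatest (range fun t => |sigmoid (t + v) - sigmoid (t + u)|)
      (2 * sigmoid ((v - u) / 2) - 1) :=
  ⟨⟨_, abs_sigmoid_sub_sigmoid_at_midpoint huv⟩,
    forall_mem_range.mpr fun t => abs_sigmoid_add_sub_sigmoid_add_le t huv⟩

theorem stmt_19 (u v : ℝ) (huv : u ≤ v) :
    IsGreatest
      (Set.range fun t : ℝ =>
        |(fun s => 1 / (1 + Real.exp (-s))) (t + v) -
          (fun s => 1 / (1 + Real.exp (-s))) (t + u)|)
      (2 * (fun s => 1 / (1 + Real.exp (-s))) ((v - u) / 2) - 1) ∧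
    |(fun s => 1 / (1 + Real.exp (-s))) (-(u + v) / 2 + v) -
        (fun s => 1 / (1 + Real.exp (-s))) (-(u + v) / 2 + u)| =
      2 * (fun s => 1 / (1 + Real.exp (-s))) ((v - u) / 2) - 1 ∧
    2 * (fun s => 1 / (1 + Real.exp (-s))) ((v - u) / 2) - 1 =
      |2 * (fun s => 1 / (1 + Real.exp (-s))) ((v - u) / 2) - 1| := by
  have hσ : (fun s => 1 / (1 + Real.exp (-s))) = sigmoid := funext fun s => one_div _
  rw [hσ]
  exact ⟨isGreatest_range_abs_sigmoid_add_sub_sigmoid_add huv,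
    abs_sigmoid_sub_sigmoid_at_midpoint huv,
    (abs_of_nonneg (two_mul_sigmoid_sub_one_nonneg (by linarith))).symm⟩
end
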